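/- arXiv:1607.05610 — 4 statements merged into one kernel-verified Lean document; each statement's English description precedes it below -/
import Mathlib

section
/- Let I be an ideal on ω. Then (a) every member of the homogeneity family H(I) is I-positive, i.e. H(I) ⊆ I⁺; and (b) if additionally I is admissible, then every set in the dual filter belongs to the homogeneity family, i.e. I* ⊆ H(I). -/
open Set Filter

/-- `I` is an ideal on the countable set `X`: closed under subsets and finite
unions, contains all finite sets, and does not contain the whole set. -/
def IsIdeal {X : Type*} (I : Set (Set X)) : Prop :=
  (∀ A B : Set X, A ∈ I → B ⊆ A → B ∈ I) ∧
  (∀ A B : Set X, A ∈ I → B ∈ I → A ∪ B ∈ I) ∧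
  (∀ A : Set X, A.Finite → A ∈ I) ∧
  (Set.univ : Set X) ∉ I

/-- The restriction `I|A = {B ∩ A : B ∈ I}`. -/
def restr {X : Type*} (I : Set (Set X)) (A : Set X) : Set (Set X) :=
  {C | ∃ B ∈ I, C = B ∩ A}

/-- `I|A ≅ I|B`: there is a bijection `f : B → A` such that for every
`C ⊆ A`, `C ∈ I|A ↔ f⁻¹[C] ∈ I|B`. -/
def RIso {X : Type*} (I : Set (Set X)) (A B : Set X) : Prop :=
  ∃ f : X → X, Set.BijOn f B A ∧
    ∀ C : Set X, C ⊆ A → (C ∈ restr I A ↔ B ∩ f ⁻¹' C ∈ restr I B)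

/-- The homogeneity family `H(I) = {A : I|A ≅ I}`. -/
def HF {X : Type*} (I : Set (Set X)) : Set (Set X) := {A | RIso I A Set.univ}

/-- `I` is homogeneous if `H(I) = I⁺`. -/
def HomogIdeal {X : Type*} (I : Set (Set X)) : Prop := HF I = {A | A ∉ I}

/-- `I` is anti-homogeneous if `H(I) = I*`. -/
def AntiHomogIdeal {X : Type*} (I : Set (Set X)) : Prop := HF I = {A | Aᶜ ∈ I}

/-- `I ≅ J`: a bijection `f` of underlying sets with `A ∈ I ↔ f⁻¹[A] ∈ J`. -/
def Isomorphic {X Y : Type*} (I : Set (Set X)) (J : Set (Set Y)) : Prop :=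
  ∃ f : Y → X, Function.Bijective f ∧ ∀ A : Set X, A ∈ I ↔ f ⁻¹' A ∈ J

/-- The ideal `Fin ⊕ P(ω)` on `{0,1} × ω` (here `Bool × ℕ`, `true` playing the
role of `1`): all sets `A` with `{n : (1,n) ∈ A}` finite. -/
def FinOplusAll : Set (Set (Bool × ℕ)) := {A | {n : ℕ | (true, n) ∈ A}.Finite}

/-- An ideal on `ω` is admissible if it is not isomorphic to `Fin ⊕ P(ω)`. -/
def Admissible (I : Set (Set ℕ)) : Prop := ¬ Isomorphic I FinOplusAll

/-- An injection `f` is bi-`I`-invariant if `f[A] ∈ I ↔ A ∈ I` for all `A`. -/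
def BiInvariant {X : Type*} (I : Set (Set X)) (f : X → X) : Prop :=
  Function.Injective f ∧ ∀ A : Set X, f '' A ∈ I ↔ A ∈ I

/-- The set of fixed points of `f`. -/
def fixedSet {X : Type*} (f : X → X) : Set X := {x | f x = x}

/-- `I` is a maximal ideal. -/
def MaximalIdeal {X : Type*} (I : Set (Set X)) : Prop :=
  IsIdeal I ∧ ∀ A : Set X, A ∈ I ∨ Aᶜ ∈ I

/-! (a) If `A ∈ I ∩ H(I)`, then `A ∈ I|A`, and the isomorphism `I|A ≅ I` carries `A` to the
whole space, which would then lie in `I`.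

(b) Let `Aᶜ ∈ I`. If `A` contains an infinite `D ∈ I`, a bijection of `D ∪ Aᶜ` onto `D`, extended
by the identity on `A \ D`, maps the space onto `A`; being the identity off a set of `I`, it
preserves `I` in both directions. Otherwise `I = {B | B ∩ A finite}`: if `Aᶜ` is finite this is
`Fin`, preserved by any bijection onto the infinite set `A`, and if `Aᶜ` is infinite it is
`Fin ⊕ P(ω)`, which admissibility excludes. -/

theorem Set.subset_inter_union_compl {X : Type*} (B A : Set X) : B ⊆ B ∩ A ∪ Aᶜ :=
  fun x hx => (em (x ∈ A)).imp (fun hxA => ⟨hx, hxA⟩) id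

theorem Set.finite_inter_iff_of_compl_finite {X : Type*} {A B : Set X} (hAc : Aᶜ.Finite) :
    (B ∩ A).Finite ↔ B.Finite :=
  ⟨fun h => (h.union hAc).subset (subset_inter_union_compl B A),
    fun h => h.subset inter_subset_left⟩

theorem Set.Infinite.exists_bijOn {X Y : Type*} [Countable X] [Countable Y] {s : Set X}
    {t : Set Y} (hs : s.Infinite) (ht : t.Infinite) : ∃ f : X → Y, BijOn f s t := by
  have := hs.to_subtype
  have := ht.to_subtype
  obtain ⟨e⟩ := nonempty_equiv_of_countable (α := s) (β := t)
  set f := Function.extend Subtype.val (fun x => (e x : Y)) fun _ => ht.nonempty.some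
  have hf : ∀ x (hx : x ∈ s), f x = e ⟨x, hx⟩ := fun x hx =>
    Subtype.val_injective.extend_apply _ _ ⟨x, hx⟩
  refine ⟨f, fun x hx => ?_, fun x hx y hy hxy => ?_, fun y hy => ?_⟩
  · rw [hf x hx]
    exact (e _).2
  · rw [hf x hx, hf y hy] at hxy
    simpa using e.injective (Subtype.ext hxy)
  · exact ⟨e.symm ⟨y, hy⟩, (e.symm _).2, by rw [hf _ (e.symm _).2]; simp⟩

theorem Set.BijOn.finite_preimage_iff {α β : Type*} {f : α → β} {t : Set β}
    (hf : BijOn f univ t) (C : Set β) : (f ⁻¹' C).Finite ↔ (C ∩ t).Finite := by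
  rw [← finite_image_iff (hf.injOn.mono (subset_univ _)), image_preimage_eq_inter_range,
    ← image_univ, hf.image_eq]

theorem restr_univ {X : Type*} (I : Set (Set X)) : restr I univ = I := by
  ext C
  simp [restr]

namespace IsIdeal

variable {X : Type*} {I : Set (Set X)}

theorem mem_of_subset (hI : IsIdeal I) {A B : Set X} (hA : A ∈ I) (hBA : B ⊆ A) : B ∈ I :=
  hI.1 A B hA hBA

theorem union_mem (hI : IsIdeal I) {A B : Set X} (hA : A ∈ I) (hB : B ∈ I) : A ∪ B ∈ I :=
  hI.2.1 A B hA hB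

theorem mem_of_finite (hI : IsIdeal I) {A : Set X} (hA : A.Finite) : A ∈ I :=
  hI.2.2.1 A hA

theorem univ_notMem (hI : IsIdeal I) : univ ∉ I :=
  hI.2.2.2

theorem infinite_of_compl_mem (hI : IsIdeal I) {A : Set X} (hAc : Aᶜ ∈ I) : A.Infinite :=
  fun hA => hI.univ_notMem (union_compl_self A ▸ hI.union_mem (hI.mem_of_finite hA) hAc)

theorem mem_restr_iff (hI : IsIdeal I) {A C : Set X} (hC : C ⊆ A) :
    C ∈ restr I A ↔ C ∈ I :=
  ⟨fun ⟨_, hB, hCB⟩ => hCB ▸ hI.mem_of_subset hB inter_subset_left,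
    fun h => ⟨C, h, (inter_eq_left.2 hC).symm⟩⟩

theorem HF_subset_setOf_notMem (hI : IsIdeal I) : HF I ⊆ {A | A ∉ I} := by
  rintro A ⟨f, hf, hiff⟩ hA
  have hpre : f ⁻¹' A = univ := univ_subset_iff.1 fun x _ => hf.mapsTo (mem_univ x)
  have := (hiff A subset_rfl).1 ((hI.mem_restr_iff subset_rfl).2 hA)
  rw [hpre, univ_inter, restr_univ] at this
  exact hI.univ_notMem this

theorem mem_HF_of_bijOn (hI : IsIdeal I) {f : X → X} {A : Set X} (hf : BijOn f univ A)
    (h : ∀ C ⊆ A, C ∈ I ↔ f ⁻¹' C ∈ I) : A ∈ HF I :=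
  ⟨f, hf, fun C hC => by rw [hI.mem_restr_iff hC, univ_inter, restr_univ]; exact h C hC⟩

theorem mem_iff_preimage_mem_of_eqOn_compl (hI : IsIdeal I) {S : Set X} {f : X → X}
    (hS : S ∈ I) (hf : EqOn f id Sᶜ) (C : Set X) : C ∈ I ↔ f ⁻¹' C ∈ I := by
  constructor
  · refine fun hC => hI.mem_of_subset (hI.union_mem hS hC) fun x hx => ?_
    refine or_iff_not_imp_left.2 fun hxS => ?_
    rwa [mem_preimage, hf hxS] at hx
  · refine fun hC => hI.mem_of_subset (hI.union_mem hS hC) fun x hx => ?_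
    refine or_iff_not_imp_left.2 fun hxS => ?_
    rwa [mem_preimage, hf hxS]

theorem mem_HF_of_infinite_subset_mem [Countable X] (hI : IsIdeal I) {A D : Set X}
    (hAc : Aᶜ ∈ I) (hDA : D ⊆ A) (hD : D ∈ I) (hDinf : D.Infinite) : A ∈ HF I := by
  classical
  set S := D ∪ Aᶜ
  obtain ⟨g, hg⟩ := (hDinf.mono subset_union_left : S.Infinite).exists_bijOn hDinf
  have hA : D ∪ Sᶜ = A := by
    rw [compl_union, compl_compl, ← sdiff_eq_compl_inter, union_sdiff_cancel hDA]
  have hbij : BijOn (S.piecewise g id) (S ∪ Sᶜ) (D ∪ Sᶜ) := by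
    refine (hg.congr (piecewise_eqOn _ _ _).symm).union
      ((bijOn_id _).congr (piecewise_eqOn_compl _ _ _).symm) ?_
    rw [injOn_union disjoint_compl_right]
    refine ⟨hg.injOn.congr (piecewise_eqOn _ _ _).symm,
      injOn_id _ |>.congr (piecewise_eqOn_compl _ _ _).symm, fun x hx y hy hxy => hy ?_⟩
    rw [piecewise_eq_of_mem _ _ _ hx, piecewise_eq_of_notMem _ _ _ hy, id] at hxy
    exact hxy ▸ subset_union_left (hg.mapsTo hx)
  rw [union_compl_self, hA] at hbij
  exact hI.mem_HF_of_bijOn hbij fun C _ =>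
    hI.mem_iff_preimage_mem_of_eqOn_compl (hI.union_mem hD hAc) (piecewise_eqOn_compl _ _ _) C

theorem mem_iff_finite_inter (hI : IsIdeal I) {A : Set X} (hAc : Aᶜ ∈ I)
    (hA : ∀ D ⊆ A, D ∈ I → D.Finite) (B : Set X) : B ∈ I ↔ (B ∩ A).Finite :=
  ⟨fun hB => hA _ inter_subset_right (hI.mem_of_subset hB inter_subset_left),
    fun hfin => hI.mem_of_subset (hI.union_mem (hI.mem_of_finite hfin) hAc)
      (subset_inter_union_compl B A)⟩

theorem mem_HF_of_mem_iff_finite [Countable X] (hI : IsIdeal I) (hfin : ∀ B, B ∈ I ↔ B.Finite)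
    {A : Set X} (hA : A.Infinite) : A ∈ HF I := by
  obtain ⟨f, hf⟩ := (hA.mono (subset_univ A)).exists_bijOn hA
  exact hI.mem_HF_of_bijOn hf fun C hC => by
    rw [hfin, hfin, hf.finite_preimage_iff, inter_eq_left.2 hC]

end IsIdeal

theorem isomorphic_finOplusAll {X : Type*} [Countable X] {I : Set (Set X)} {A : Set X}
    (hI : ∀ B, B ∈ I ↔ (B ∩ A).Finite) (hA : A.Infinite) (hAc : Aᶜ.Infinite) :
    Isomorphic I FinOplusAll := by
  obtain ⟨g₁, hg₁⟩ := (infinite_univ (α := ℕ)).exists_bijOn hA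
  obtain ⟨g₀, hg₀⟩ := (infinite_univ (α := ℕ)).exists_bijOn hAc
  refine ⟨fun p => cond p.1 (g₁ p.2) (g₀ p.2), ⟨?_, fun x => ?_⟩, fun B => ?_⟩
  · rintro ⟨_ | _, m⟩ ⟨_ | _, n⟩ h
    · rw [hg₀.injOn (mem_univ m) (mem_univ n) h]
    · change g₀ m = g₁ n at h
      exact absurd (h ▸ hg₀.mapsTo (mem_univ m)) (not_not.2 (hg₁.mapsTo (mem_univ n)))
    · change g₁ m = g₀ n at h
      exact absurd (h ▸ hg₁.mapsTo (mem_univ m)) (hg₀.mapsTo (mem_univ n))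
    · rw [hg₁.injOn (mem_univ m) (mem_univ n) h]
  · by_cases hx : x ∈ A
    · obtain ⟨n, -, rfl⟩ := hg₁.surjOn hx
      exact ⟨(true, n), rfl⟩
    · obtain ⟨n, -, rfl⟩ := hg₀.surjOn hx
      exact ⟨(false, n), rfl⟩
  · change B ∈ I ↔ (g₁ ⁻¹' B).Finite
    rw [hI, hg₁.finite_preimage_iff]

/-- `H(I) ⊆ I⁺`, and if `I` is admissible then `I* ⊆ H(I)`. -/
theorem stmt_0 (I : Set (Set ℕ)) (hI : IsIdeal I) :
    (HF I ⊆ {A : Set ℕ | A ∉ I}) ∧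
    (Admissible I → {A : Set ℕ | Aᶜ ∈ I} ⊆ HF I) := by
  refine ⟨hI.HF_subset_setOf_notMem, fun hAdm A (hAc : Aᶜ ∈ I) => ?_⟩
  by_cases hD : ∃ D ⊆ A, D ∈ I ∧ D.Infinite
  · obtain ⟨D, hDA, hD, hDinf⟩ := hD
    exact hI.mem_HF_of_infinite_subset_mem hAc hDA hD hDinf
  push Not at hD
  have hIA := hI.mem_iff_finite_inter hAc hD
  have hA := hI.infinite_of_compl_mem hAc
  rcases Aᶜ.finite_or_infinite with hAc_fin | hAc_inf
  · exact hI.mem_HF_of_mem_iff_finite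
      (fun B => (hIA B).trans (finite_inter_iff_of_compl_finite hAc_fin)) hA
  · exact absurd (isomorphic_finOplusAll hIA hA hAc_inf) hAdm
end

section
/- For every ideal I on ω, the homogeneity family H(I) is closed under supersets: if A ∈ H(I) and A ⊆ B ⊆ ω, then B ∈ H(I). -/
open Set Filter

/-!
Let `f` witness `I|A ≅ I`: it maps `ω` bijectively onto `A` and transports membership in `I` for
subsets of `A`. To reach `B ⊇ A`, use Hilbert's hotel: let `O` be the forward `f`-orbit of `B \ A`
and take the identity on `O` and `f` elsewhere. This maps `ω` bijectively onto `B`, and because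
`f⁻¹[O] = O`, the preimage of `C ⊆ B` is `(C ∩ O) ∪ f⁻¹[C \ O]` with `C \ O ⊆ A`, which lies in `I`
exactly when `C ∩ O` and `C \ O` do, that is, when `C` does.
-/

section HomogeneityFamily

variable {X : Type*} {I : Set (Set X)}

lemma mem_restr_iff (hI : IsLowerSet I) {S C : Set X} : C ∈ restr I S ↔ C ⊆ S ∧ C ∈ I := by
  constructor
  · rintro ⟨D, hD, rfl⟩
    exact ⟨inter_subset_right, hI inter_subset_left hD⟩
  · rintro ⟨hCS, hC⟩
    exact ⟨C, hC, (inter_eq_left.mpr hCS).symm⟩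

lemma mem_HF_iff (hI : IsLowerSet I) {A : Set X} :
    A ∈ HF I ↔ ∃ f : X → X, BijOn f univ A ∧ ∀ C ⊆ A, C ∈ I ↔ f ⁻¹' C ∈ I := by
  refine exists_congr fun f => and_congr_right fun _ => forall₂_congr fun C hC => ?_
  simp only [mem_restr_iff hI, univ_inter, subset_univ, true_and, hC]

lemma union_mem_iff (hI : IsLowerSet I) (hunion : ∀ A B, A ∈ I → B ∈ I → A ∪ B ∈ I)
    {A B : Set X} : A ∪ B ∈ I ↔ A ∈ I ∧ B ∈ I :=
  ⟨fun h => ⟨hI subset_union_left h, hI subset_union_right h⟩, fun h => hunion A B h.1 h.2⟩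

end HomogeneityFamily

section ForwardOrbit

variable {X : Type*} {f : X → X} {D : Set X}

def forwardOrbit (f : X → X) (D : Set X) : Set X := ⋃ n, f^[n] '' D

lemma subset_forwardOrbit : D ⊆ forwardOrbit f D :=
  fun x hx => mem_iUnion.mpr ⟨0, x, hx, rfl⟩

lemma forwardOrbit_subset {S : Set X} (hDS : D ⊆ S) (hS : MapsTo f S S) :
    forwardOrbit f D ⊆ S :=
  iUnion_subset fun n => ((hS.iterate n).mono_left hDS).image_subset

lemma mapsTo_forwardOrbit : MapsTo f (forwardOrbit f D) (forwardOrbit f D) := by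
  intro x hx
  obtain ⟨n, y, hy, rfl⟩ := mem_iUnion.mp hx
  exact mem_iUnion.mpr ⟨n + 1, y, hy, Function.iterate_succ_apply' f n y⟩

lemma preimage_forwardOrbit (hf : Function.Injective f) (hD : Disjoint D (range f)) :
    f ⁻¹' forwardOrbit f D = forwardOrbit f D := by
  refine Subset.antisymm (fun x hx => ?_) mapsTo_forwardOrbit
  obtain ⟨n, y, hy, hyx⟩ := mem_iUnion.mp hx
  cases n with
  | zero => exact absurd hyx (hD.ne_of_mem hy (mem_range_self x))
  | succ n =>
    rw [Function.iterate_succ_apply'] at hyx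
    exact mem_iUnion.mpr ⟨n, y, hy, hf hyx⟩

end ForwardOrbit

section HilbertHotel

variable {X : Type*} {f : X → X} {A B O : Set X} [DecidablePred (· ∈ O)]

lemma bijOn_piecewise_id (hf : BijOn f univ A) (hAB : A ⊆ B) (hO : f ⁻¹' O = O) (hOB : O ⊆ B)
    (hBAO : B \ A ⊆ O) : BijOn (O.piecewise id f) univ B := by
  have hfO {x : X} : f x ∈ O ↔ x ∈ O := Set.ext_iff.mp hO x
  refine ⟨fun x _ => ?_, ?_, fun b hb => ?_⟩
  · by_cases hx : x ∈ O
    · simpa [hx] using hOB hx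
    · simpa [hx] using hAB (hf.mapsTo (mem_univ x))
  · refine injOn_univ.mpr <| (injective_piecewise_iff O).mpr
      ⟨injOn_id O, hf.injOn.mono (subset_univ _), ?_⟩
    rintro x hx y hy rfl
    exact hy (hfO.mp hx)
  · by_cases hbO : b ∈ O
    · exact ⟨b, mem_univ b, by simp [hbO]⟩
    · have hbA : b ∈ A := by_contra fun hbA => hbO (hBAO ⟨hb, hbA⟩)
      obtain ⟨x, -, rfl⟩ := hf.surjOn hbA
      exact ⟨x, mem_univ x, by simp [mt hfO.mpr hbO]⟩

lemma piecewise_id_preimage (hO : f ⁻¹' O = O) (C : Set X) :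
    O.piecewise id f ⁻¹' C = C ∩ O ∪ f ⁻¹' (C \ O) := by
  rw [piecewise_preimage, Set.ite, preimage_id, preimage_sdiff, hO]

lemma piecewise_id_preimage_mem_iff {I : Set (Set X)} (hI : IsLowerSet I)
    (hunion : ∀ A B, A ∈ I → B ∈ I → A ∪ B ∈ I) (hf : ∀ C ⊆ A, C ∈ I ↔ f ⁻¹' C ∈ I)
    (hO : f ⁻¹' O = O) (hBAO : B \ A ⊆ O) {C : Set X} (hCB : C ⊆ B) :
    O.piecewise id f ⁻¹' C ∈ I ↔ C ∈ I := by
  have hCA : C \ O ⊆ A := fun x hx => by_contra fun hxA => hx.2 (hBAO ⟨hCB hx.1, hxA⟩)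
  rw [piecewise_id_preimage hO, union_mem_iff hI hunion, ← hf _ hCA, ← union_mem_iff hI hunion,
    inter_union_sdiff]

end HilbertHotel

/-- the homogeneity family of any ideal is closed under supersets. -/
theorem stmt_1 (I : Set (Set ℕ)) (hI : IsIdeal I) (A B : Set ℕ)
    (hA : A ∈ HF I) (hAB : A ⊆ B) : B ∈ HF I := by
  classical
  have hlow : IsLowerSet I := fun _ _ hCD hD => hI.1 _ _ hD hCD
  obtain ⟨f, hf, hfI⟩ := (mem_HF_iff hlow).mp hA
  set O := forwardOrbit f (B \ A)
  have hrange : range f = A := by rw [← image_univ, hf.image_eq]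
  have hO : f ⁻¹' O = O :=
    preimage_forwardOrbit (injOn_univ.mp hf.injOn) (hrange ▸ disjoint_sdiff_left)
  have hOB : O ⊆ B := forwardOrbit_subset sdiff_subset fun x _ => hAB (hf.mapsTo (mem_univ x))
  have hBAO : B \ A ⊆ O := subset_forwardOrbit
  exact (mem_HF_iff hlow).mpr ⟨O.piecewise id f, bijOn_piecewise_id hf hAB hO hOB hBAO,
    fun C hC => (piecewise_id_preimage_mem_iff hlow hI.2.1 hfI hO hBAO hC).symm⟩
end

section
/- The van der Waerden ideal W = {A ⊆ ω : there exists n ∈ ω such that A contains no arithmetic progression of length n} is homogeneous. -/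
open Set Filter

/-- `A` contains an arithmetic progression of length `n`. -/
def ContainsAP (A : Set ℕ) (n : ℕ) : Prop :=
  ∃ a d : ℕ, 0 < d ∧ ∀ i < n, a + i * d ∈ A

/-- The van der Waerden ideal. -/
def vdW : Set (Set ℕ) := {A | ∃ n : ℕ, ¬ ContainsAP A n}

/-!
Closure of `vdW` under finite unions is van der Waerden's theorem, in the finitary form that
compactness extracts from the Hales–Jewett theorem.

If `I|A ≅ I` then `A ∉ I`, since `univ ∉ I`. Conversely, let `A` contain arbitrarily long
progressions. Choose progressions `P k ⊆ A` of length `2 ^ k`, each beginning beyond twice the end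
of the previous one, and map the `k`-th dyadic block of `ℕ` increasingly and affinely onto `P k`.
A progression in the image cannot pass from one `P k` to a later one after its first term, so it
pulls back to a progression; a long progression in `ℕ` has a long piece inside one dyadic block,
so it pushes forward to a progression. Hence this injection `ℕ → A` preserves `vdW` in both
directions, and the Schröder–Bernstein bijection built from it and the inclusion `A → ℕ`, which
agrees pointwise with one of the two, is an isomorphism `vdW ≅ vdW|A`.
-/

section Ideals

variable {X : Type*} {I : Set (Set X)}

lemma union_mem_iff_of_closed (hsub : ∀ A B : Set X, A ∈ I → B ⊆ A → B ∈ I)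
    (hunion : ∀ A B : Set X, A ∈ I → B ∈ I → A ∪ B ∈ I) {A B : Set X} :
    A ∪ B ∈ I ↔ A ∈ I ∧ B ∈ I :=
  ⟨fun h => ⟨hsub _ _ h subset_union_left, hsub _ _ h subset_union_right⟩,
    fun h => hunion _ _ h.1 h.2⟩

lemma mem_restr_iff_of_subset (hsub : ∀ A B : Set X, A ∈ I → B ⊆ A → B ∈ I)
    {A C : Set X} (hC : C ⊆ A) : C ∈ restr I A ↔ C ∈ I := by
  constructor
  · rintro ⟨B, hB, rfl⟩
    exact hsub _ _ hB inter_subset_left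
  · exact fun h => ⟨C, h, (inter_eq_left.mpr hC).symm⟩

lemma notMem_of_mem_HF (hI : (univ : Set X) ∉ I) {A : Set X} (hA : A ∈ HF I) : A ∉ I := by
  obtain ⟨f, hf, hiso⟩ := hA
  intro hAI
  obtain ⟨B, hB, hBuniv⟩ := (hiso A subset_rfl).mp ⟨A, hAI, (inter_self A).symm⟩
  rw [univ_inter, preimage_eq_univ_iff.mpr (range_subset_iff.mpr fun x => hf.mapsTo trivial),
    inter_univ] at hBuniv
  exact hI (hBuniv ▸ hB)

lemma rIso_univ_of_bijOn (hsub : ∀ A B : Set X, A ∈ I → B ⊆ A → B ∈ I) {A : Set X}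
    {h : X → X} (hbij : BijOn h univ A) (hinv : ∀ D, h '' D ∈ I ↔ D ∈ I) : RIso I A univ := by
  refine ⟨h, hbij, fun C hC => ?_⟩
  rw [mem_restr_iff_of_subset hsub hC, mem_restr_iff_of_subset hsub (subset_univ _), univ_inter,
    ← hinv (h ⁻¹' C), image_preimage_eq_of_subset (hC.trans hbij.surjOn.subset_range)]

lemma image_mem_iff_of_eq_or_eq (hsub : ∀ A B : Set X, A ∈ I → B ⊆ A → B ∈ I)
    (hunion : ∀ A B : Set X, A ∈ I → B ∈ I → A ∪ B ∈ I) {f h : X → X}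
    (hf : ∀ D, f '' D ∈ I ↔ D ∈ I) (hh : ∀ x, h x = f x ∨ h x = x) (D : Set X) :
    h '' D ∈ I ↔ D ∈ I := by
  set Z := {x | h x = f x}
  have hZ : h '' (D ∩ Z) = f '' (D ∩ Z) := EqOn.image_eq fun x hx => hx.2
  have hZc : h '' (D \ Z) = D \ Z :=
    (EqOn.image_eq fun x hx => (hh x).resolve_left hx.2).trans (image_id _)
  rw [← inter_union_sdiff D Z, image_union, hZ, hZc, union_mem_iff_of_closed hsub hunion,
    union_mem_iff_of_closed hsub hunion, hf]

lemma exists_bijOn_image_mem_iff (hsub : ∀ A B : Set X, A ∈ I → B ⊆ A → B ∈ I)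
    (hunion : ∀ A B : Set X, A ∈ I → B ∈ I → A ∪ B ∈ I) {A : Set X} {f : X → X}
    (hinj : f.Injective) (hfA : ∀ x, f x ∈ A) (hf : ∀ D, f '' D ∈ I ↔ D ∈ I) :
    ∃ h : X → X, BijOn h univ A ∧ ∀ D, h '' D ∈ I ↔ D ∈ I := by
  obtain ⟨g, hg, hgf⟩ := Function.Embedding.schroeder_bernstein_of_rel
    (f := codRestrict f A hfA) (g := Subtype.val) (hinj.codRestrict hfA)
    Subtype.val_injective (fun x y => (y : X) = f x ∨ (y : X) = x)
    (fun _ => Or.inl rfl) (fun _ => Or.inr rfl)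
  refine ⟨Subtype.val ∘ g, ⟨fun x _ => (g x).2, (Subtype.val_injective.comp hg.1).injOn,
    fun y hy => ?_⟩, image_mem_iff_of_eq_or_eq hsub hunion hf hgf⟩
  obtain ⟨x, hx⟩ := hg.2 ⟨y, hy⟩
  exact ⟨x, trivial, congrArg Subtype.val hx⟩

end Ideals

lemma notMem_vdW_iff {A : Set ℕ} : A ∉ vdW ↔ ∀ n, ContainsAP A n := by
  simp [vdW]

lemma ContainsAP.mono {A B : Set ℕ} {n : ℕ} (hAB : A ⊆ B) : ContainsAP A n → ContainsAP B n :=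
  fun ⟨a, d, hd, hA⟩ => ⟨a, d, hd, fun i hi => hAB (hA i hi)⟩

lemma ContainsAP.of_preimage_affine {A : Set ℕ} {n b e : ℕ} (he : 0 < e) :
    ContainsAP ((fun x => b + x * e) ⁻¹' A) n → ContainsAP A n := by
  rintro ⟨a, d, hd, hA⟩
  refine ⟨b + a * e, d * e, Nat.mul_pos hd he, fun i hi => ?_⟩
  rw [show b + a * e + i * (d * e) = b + (a + i * d) * e by ring]
  exact hA i hi

lemma vdW_of_subset {A B : Set ℕ} (hA : A ∈ vdW) (hBA : B ⊆ A) : B ∈ vdW :=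
  let ⟨n, hn⟩ := hA
  ⟨n, fun hB => hn (ContainsAP.mono hBA hB)⟩

lemma vdW_of_finite {A : Set ℕ} (hA : A.Finite) : A ∈ vdW := by
  obtain ⟨m, hm⟩ := hA.bddAbove
  refine ⟨m + 2, fun ⟨a, d, hd, hAP⟩ => ?_⟩
  have hlast : a + (m + 1) * d ≤ m := hm (hAP (m + 1) (by omega))
  nlinarith

lemma univ_notMem_vdW : (univ : Set ℕ) ∉ vdW :=
  notMem_vdW_iff.mpr fun _ => ⟨0, 1, one_pos, fun _ _ => trivial⟩

/-- Finitary van der Waerden theorem, obtained from `Combinatorics.exists_mono_homothetic_copy`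
by compactness: an ultrafilter limit of colourings without a monochromatic progression below `N`,
for every `N`, would be a colouring of `ℕ` without one. -/
theorem exists_bound_mono_ap {κ : Type*} [Finite κ] (n : ℕ) :
    ∃ N, ∀ χ : ℕ → κ, ∃ a d c, 0 < d ∧ ∀ i < n, a + i * d < N ∧ χ (a + i * d) = c := by
  by_contra! hbad
  choose χ hχ using hbad
  set U := Ultrafilter.of (atTop : Filter ℕ)
  choose ψ hψ using fun p => (U.map fun N => χ N p).eq_pure_of_finite
  have hlim : ∀ p, ∀ᶠ N in (U : Filter ℕ), χ N p = ψ p := fun p =>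
    show {ψ p} ∈ U.map fun N => χ N p by rw [hψ p]; exact Ultrafilter.mem_pure.mpr rfl
  obtain ⟨d, hd, a, c, hmono⟩ := Combinatorics.exists_mono_homothetic_copy (Finset.range n) ψ
  have hlarge : ∀ᶠ N in (U : Filter ℕ), a + n * d < N :=
    (eventually_gt_atTop _).filter_mono (Ultrafilter.of_le _)
  obtain ⟨N, hN, hNlarge⟩ :=
    (((Finset.range n).eventually_all.mpr fun i _ => hlim (a + i * d)).and hlarge).exists
  obtain ⟨i, hi, hne⟩ := hχ N a d c hd
  refine hne (by nlinarith) ?_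
  rw [hN i (Finset.mem_range.mpr hi), ← hmono i (Finset.mem_range.mpr hi), smul_eq_mul,
    add_comm, mul_comm]

lemma union_mem_vdW {A B : Set ℕ} (hA : A ∈ vdW) (hB : B ∈ vdW) : A ∪ B ∈ vdW := by
  classical
  obtain ⟨p, hp⟩ := hA
  obtain ⟨q, hq⟩ := hB
  obtain ⟨N, hN⟩ := exists_bound_mono_ap (κ := Bool) (max p q)
  refine ⟨N, fun ⟨b, e, he, hAB⟩ => ?_⟩
  obtain ⟨a, d, c, hd, hmono⟩ := hN fun x => decide (b + x * e ∈ A)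
  cases c
  · refine hq (.of_preimage_affine (b := b) he ⟨a, d, hd, fun i hi => ?_⟩)
    obtain ⟨hlt, hnotA⟩ := hmono i (lt_max_of_lt_right hi)
    exact (hAB _ hlt).resolve_left (of_decide_eq_false hnotA)
  · exact hp (.of_preimage_affine (b := b) he
      ⟨a, d, hd, fun i hi => of_decide_eq_true (hmono i (lt_max_of_lt_left hi)).2⟩)

theorem isIdeal_vdW : IsIdeal vdW :=
  ⟨fun _ _ => vdW_of_subset, fun _ _ => union_mem_vdW, fun _ => vdW_of_finite, univ_notMem_vdW⟩

lemma exists_ap_above {A : Set ℕ} (hA : A ∉ vdW) (N L : ℕ) :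
    ∃ a d, 0 < d ∧ N < a ∧ ∀ i < L, a + i * d ∈ A := by
  have htail : A ∩ Ioi N ∉ vdW := fun h => hA <| vdW_of_subset
    (union_mem_vdW h (vdW_of_finite (finite_Iic N))) fun x hx =>
      (lt_or_ge N x).imp (fun h => ⟨hx, h⟩) id
  obtain ⟨a, d, hd, hAP⟩ := notMem_vdW_iff.mp htail (L + 1)
  exact ⟨a, d, hd, by simpa using (hAP 0 (by omega)).2, fun i hi => (hAP i (by omega)).1⟩

/-- Progressions `P k = {a k + i * d k : i < 2 ^ k}`, each beginning beyond twice the end of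
the previous one. -/
structure LacunaryAPs (a d : ℕ → ℕ) : Prop where
  pos : ∀ k, 0 < d k
  gap : ∀ k, 2 * (a k + 2 ^ k * d k) < a (k + 1)

lemma exists_lacunaryAPs {A : Set ℕ} (hA : A ∉ vdW) :
    ∃ a d, LacunaryAPs a d ∧ ∀ k, ∀ i < 2 ^ k, a k + i * d k ∈ A := by
  choose a' d' hd' ha' hA' using exists_ap_above hA
  let p : ℕ → ℕ × ℕ := fun k => Nat.rec (a' 0 1, d' 0 1)
    (fun k q => (a' (2 * (q.1 + 2 ^ k * q.2)) (2 ^ (k + 1)),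
      d' (2 * (q.1 + 2 ^ k * q.2)) (2 ^ (k + 1)))) k
  refine ⟨fun k => (p k).1, fun k => (p k).2, ⟨fun k => ?_, fun k => ha' _ _⟩, fun k => ?_⟩
  · cases k <;> exact hd' _ _
  · cases k <;> exact hA' _ _

namespace LacunaryAPs

variable {a d : ℕ → ℕ}

lemma monotone (h : LacunaryAPs a d) : Monotone a :=
  monotone_nat_of_le_succ fun k => by have := h.gap k; omega

lemma two_mul_end_lt (h : LacunaryAPs a d) {j k : ℕ} (hjk : j < k) :
    2 * (a j + 2 ^ j * d j) < a k :=
  (h.gap j).trans_le (h.monotone hjk)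

end LacunaryAPs

/-- The index `k` of the dyadic block `[2 ^ k - 1, 2 ^ (k + 1) - 1)` containing `x`. -/
def blockIdx (x : ℕ) : ℕ := Nat.log 2 (x + 1)

/-- The map sending the `k`-th dyadic block increasingly onto the progression
`{a k + i * d k : i < 2 ^ k}`. -/
def blockMap (a d : ℕ → ℕ) (x : ℕ) : ℕ :=
  a (blockIdx x) + (x + 1 - 2 ^ blockIdx x) * d (blockIdx x)

lemma two_pow_blockIdx_le (x : ℕ) : 2 ^ blockIdx x ≤ x + 1 :=
  Nat.pow_log_le_self 2 x.succ_ne_zero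

lemma lt_two_pow_blockIdx (x : ℕ) : x + 1 < 2 ^ (blockIdx x + 1) :=
  Nat.lt_pow_succ_log_self one_lt_two _

lemma blockIdx_mono : Monotone blockIdx :=
  fun _ _ h => Nat.log_mono_right (Nat.succ_le_succ h)

lemma blockIdx_le_succ_of_le_two_mul {x y : ℕ} (h : y ≤ 2 * x) : blockIdx y ≤ blockIdx x + 1 :=
  calc blockIdx y ≤ Nat.log 2 ((x + 1) * 2) := Nat.log_mono_right (by omega)
    _ = blockIdx x + 1 := Nat.log_mul_base one_lt_two x.succ_ne_zero

lemma offset_lt_two_pow_blockIdx (x : ℕ) : x + 1 - 2 ^ blockIdx x < 2 ^ blockIdx x := by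
  have := lt_two_pow_blockIdx x
  rw [pow_succ] at this
  omega

lemma exists_const_run {g : ℕ → ℕ} (hg : Monotone g) (n : ℕ) (h : g (4 * n) ≤ g (2 * n) + 1) :
    ∃ s ≤ 3 * n, ∀ i < n, g (s + i) = g s := by
  have h23 := hg (show 2 * n ≤ 3 * n by omega)
  have h34 := hg (show 3 * n ≤ 4 * n by omega)
  by_cases h3 : g (3 * n) = g (2 * n)
  · refine ⟨2 * n, by omega, fun i hi => ?_⟩
    have := hg (show 2 * n ≤ 2 * n + i by omega)
    have := hg (show 2 * n + i ≤ 3 * n by omega)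
    omega
  · refine ⟨3 * n, le_rfl, fun i hi => ?_⟩
    have := hg (show 3 * n ≤ 3 * n + i by omega)
    have := hg (show 3 * n + i ≤ 4 * n by omega)
    omega

section BlockMap

variable {a d : ℕ → ℕ}

lemma blockMap_mem {A : Set ℕ} (hA : ∀ k, ∀ i < 2 ^ k, a k + i * d k ∈ A) (x : ℕ) :
    blockMap a d x ∈ A :=
  hA _ _ (offset_lt_two_pow_blockIdx x)

lemma blockMap_eq_add {x y : ℕ} (hxy : x ≤ y) (hblk : blockIdx x = blockIdx y) :
    blockMap a d y = blockMap a d x + (y - x) * d (blockIdx x) := by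
  have := two_pow_blockIdx_le x
  rw [blockMap, blockMap, ← hblk, add_assoc, ← add_mul]
  congr 2
  omega

lemma blockMap_lt_end (h : LacunaryAPs a d) (x : ℕ) :
    blockMap a d x < a (blockIdx x) + 2 ^ blockIdx x * d (blockIdx x) :=
  Nat.add_lt_add_left
    (Nat.mul_lt_mul_of_pos_right (offset_lt_two_pow_blockIdx x) (h.pos _)) _

lemma two_mul_blockMap_lt (h : LacunaryAPs a d) {x y : ℕ} (hxy : blockIdx x < blockIdx y) :
    2 * blockMap a d x < blockMap a d y :=
  calc 2 * blockMap a d x < 2 * (a (blockIdx x) + 2 ^ blockIdx x * d (blockIdx x)) := by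
        linarith [blockMap_lt_end h x]
    _ < a (blockIdx y) := h.two_mul_end_lt hxy
    _ ≤ blockMap a d y := Nat.le_add_right _ _

lemma strictMono_blockMap (h : LacunaryAPs a d) : StrictMono (blockMap a d) := by
  intro x y hxy
  rcases (blockIdx_mono hxy.le).eq_or_lt with hblk | hblk
  · rw [blockMap_eq_add hxy.le hblk]
    have := Nat.mul_pos (Nat.sub_pos_of_lt hxy) (h.pos (blockIdx x))
    omega
  · linarith [two_mul_blockMap_lt h hblk]

lemma blockIdx_eq_of_blockMap_le_two_mul (h : LacunaryAPs a d) {x y : ℕ}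
    (hle : blockMap a d x ≤ blockMap a d y) (hle2 : blockMap a d y ≤ 2 * blockMap a d x) :
    blockIdx x = blockIdx y :=
  (blockIdx_mono ((strictMono_blockMap h).le_iff_le.mp hle)).eq_of_not_lt
    fun hlt => (two_mul_blockMap_lt h hlt).not_ge hle2

/-- Consecutive terms of a progression, from the second one on, are within a factor `2` of each
other, so they cannot straddle two blocks: the progression lives in a single block, on which
`blockMap` is affine. -/
lemma containsAP_of_containsAP_image_blockMap (h : LacunaryAPs a d) {D : Set ℕ} {n : ℕ}
    (hD : ContainsAP (blockMap a d '' D) (n + 3)) : ContainsAP D n := by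
  obtain ⟨b, e, he, hAP⟩ := hD
  choose! x hxD hx using hAP
  have hblk : ∀ j, j + 1 < n + 3 → blockIdx (x (j + 1)) = blockIdx (x 1) := by
    intro j hj
    induction j with
    | zero => rfl
    | succ j ih =>
      rw [← ih (by omega)]
      refine (blockIdx_eq_of_blockMap_le_two_mul h ?_ ?_).symm <;>
        rw [hx _ (by omega), hx _ (by omega)] <;> nlinarith
  have hle : ∀ j, j + 1 < n + 3 → x 1 ≤ x (j + 1) := fun j hj =>
    (strictMono_blockMap h).le_iff_le.mp <| by rw [hx _ (by omega), hx _ (by omega)]; nlinarith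
  have hstep : ∀ j, j + 1 < n + 3 → (x (j + 1) - x 1) * d (blockIdx (x 1)) = j * e := by
    intro j hj
    have := blockMap_eq_add (a := a) (d := d) (hle j hj) (hblk j hj).symm
    rw [hx _ (by omega), hx _ (by omega)] at this
    nlinarith
  set q := x 2 - x 1
  have hq : q * d (blockIdx (x 1)) = e := by simpa using hstep 1 (by omega)
  refine ⟨x 1, q, Nat.pos_of_ne_zero fun h0 => by simp [h0] at hq; omega, fun j hj => ?_⟩
  have hj' : x (j + 1) - x 1 = j * q := Nat.eq_of_mul_eq_mul_right (h.pos _) <| by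
    rw [hstep j (by omega), ← hq, mul_assoc]
  rw [show x 1 + j * q = x (j + 1) by have := hle j (by omega); omega]
  exact hxD _ (by omega)

/-- Along a progression `b + i * e`, the terms of index in `[2n, 4n]` are within a factor `2`
of each other, hence meet at most two dyadic blocks; one of the halves `[2n, 3n)`, `[3n, 4n)`
lies in a single block, where `blockMap` is affine. -/
lemma containsAP_image_blockMap (h : LacunaryAPs a d) {D : Set ℕ} {n : ℕ}
    (hD : ContainsAP D (4 * n)) : ContainsAP (blockMap a d '' D) n := by
  obtain ⟨b, e, he, hAP⟩ := hD
  have hg : Monotone fun i => blockIdx (b + i * e) :=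
    fun i j hij => blockIdx_mono (by gcongr)
  obtain ⟨s, hs, hrun⟩ := exists_const_run hg n
    (blockIdx_le_succ_of_le_two_mul (by nlinarith))
  refine ⟨blockMap a d (b + s * e), e * d (blockIdx (b + s * e)), Nat.mul_pos he (h.pos _),
    fun i hi => ⟨b + (s + i) * e, hAP _ (by omega), ?_⟩⟩
  rw [blockMap_eq_add (by gcongr; omega) (hrun i hi).symm]
  congr 1
  rw [show b + (s + i) * e - (b + s * e) = i * e by rw [add_mul]; omega]
  ring

lemma biInvariant_blockMap (h : LacunaryAPs a d) : BiInvariant vdW (blockMap a d) := by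
  refine ⟨(strictMono_blockMap h).injective, fun D => ?_⟩
  rw [← not_iff_not, notMem_vdW_iff, notMem_vdW_iff]
  exact ⟨fun hD n => containsAP_of_containsAP_image_blockMap h (hD (n + 3)),
    fun hD n => containsAP_image_blockMap h (hD (4 * n))⟩

end BlockMap

lemma rIso_univ_of_notMem_vdW {A : Set ℕ} (hA : A ∉ vdW) : RIso vdW A univ := by
  obtain ⟨hsub, hunion, -, -⟩ := isIdeal_vdW
  obtain ⟨a, d, h, hAPs⟩ := exists_lacunaryAPs hA
  obtain ⟨hinj, hinv⟩ := biInvariant_blockMap h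
  obtain ⟨g, hg, hginv⟩ :=
    exists_bijOn_image_mem_iff hsub hunion hinj (blockMap_mem hAPs) hinv
  exact rIso_univ_of_bijOn hsub hg hginv

/-- the van der Waerden ideal is a homogeneous ideal. -/
theorem stmt_4 : IsIdeal vdW ∧ HomogIdeal vdW :=
  ⟨isIdeal_vdW, ext fun _ =>
    ⟨notMem_of_mem_HF univ_notMem_vdW, rIso_univ_of_notMem_vdW⟩⟩
end

section
/- Every maximal ideal I on ω satisfies condition (C1): every bi-I-invariant injection f : ω → ω has fix(f) ∈ I*. -/
open Set Filter

/-!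
Colour the points moved by `f` with three colours so that `n` and `f n` always differ
(greedily along `ℕ`: when `n` is coloured, at most two of its `f`-neighbours, `f n` and
`f⁻¹ n`, are already coloured). For a colour class `A` the image `f[A]` misses `A`, so if
`A ∉ I` then maximality puts `f[A] ⊆ ω ∖ A` in `I`, and bi-invariance gives `A ∈ I` anyway.
Hence every colour class lies in `I`, and so does their union `(fix f)ᶜ`.
-/

def otherFin3 (a b : Fin 3) : Fin 3 :=
  if 0 ≠ a ∧ 0 ≠ b then 0 else if 1 ≠ a ∧ 1 ≠ b then 1 else 2

lemma otherFin3_ne (a b : Fin 3) : otherFin3 a b ≠ a ∧ otherFin3 a b ≠ b := by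
  revert a b; decide

noncomputable def greedyColoring (f : ℕ → ℕ) : ℕ → Fin 3
  | n =>
    otherFin3
      (if _ : f n < n then greedyColoring f (f n) else 0)
      (if h : ∃ m, m < n ∧ f m = n then greedyColoring f h.choose else 0)
  termination_by n => n
  decreasing_by
  · assumption
  · exact h.choose_spec.1

lemma greedyColoring_apply_ne {f : ℕ → ℕ} (hf : Function.Injective f) {n : ℕ}
    (hn : f n ≠ n) : greedyColoring f n ≠ greedyColoring f (f n) := by
  rcases lt_or_gt_of_ne hn with h | h
  · rw [greedyColoring, dif_pos h]
    exact (otherFin3_ne _ _).1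
  · have hex : ∃ m, m < f n ∧ f m = f n := ⟨n, h, rfl⟩
    have hchoose : hex.choose = n := hf hex.choose_spec.2
    conv_rhs => rw [greedyColoring, dif_pos hex, hchoose]
    exact fun he => (otherFin3_ne _ _).2 he.symm

lemma IsIdeal.biUnion_finset_mem {X ι : Type*} {I : Set (Set X)} (hI : IsIdeal I)
    {A : ι → Set X} (s : Finset ι) (h : ∀ i ∈ s, A i ∈ I) : (⋃ i ∈ s, A i) ∈ I := by
  classical
  induction s using Finset.induction_on with
  | empty => simpa using hI.2.2.1 ∅ finite_empty
  | insert i s _ ih =>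
    rw [Finset.set_biUnion_insert]
    exact hI.2.1 _ _ (h i (s.mem_insert_self i))
      (ih fun j hj => h j (Finset.mem_insert_of_mem hj))

lemma IsIdeal.iUnion_mem {X ι : Type*} [Finite ι] {I : Set (Set X)} (hI : IsIdeal I)
    {A : ι → Set X} (h : ∀ i, A i ∈ I) : (⋃ i, A i) ∈ I := by
  have := Fintype.ofFinite ι
  simpa using hI.biUnion_finset_mem Finset.univ fun i _ => h i

lemma MaximalIdeal.mem_of_disjoint_image {X : Type*} {I : Set (Set X)} (hI : MaximalIdeal I)
    {f : X → X} (hf : ∀ A : Set X, f '' A ∈ I ↔ A ∈ I) {A : Set X}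
    (hA : Disjoint (f '' A) A) : A ∈ I := by
  rcases hI.2 A with hA' | hAc
  · exact hA'
  · exact (hf A).1 (hI.1.1 _ _ hAc hA.subset_compl_right)

/-- every maximal ideal satisfies condition (C1). -/
theorem stmt_10 (I : Set (Set ℕ)) (hI : MaximalIdeal I) :
    ∀ f : ℕ → ℕ, BiInvariant I f → (fixedSet f)ᶜ ∈ I := by
  rintro f ⟨hinj, hbi⟩
  let c := greedyColoring f
  let A : Fin 3 → Set ℕ := fun i => (fixedSet f)ᶜ ∩ c ⁻¹' {i}
  have hA : ∀ i, A i ∈ I := fun i =>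
    hI.mem_of_disjoint_image hbi <| disjoint_left.2 <| by
      rintro _ ⟨n, ⟨hn, rfl⟩, rfl⟩ ⟨-, hfn⟩
      exact greedyColoring_apply_ne hinj hn hfn.symm
  have hcover : (fixedSet f)ᶜ ⊆ ⋃ i, A i := fun n hn => mem_iUnion.2 ⟨c n, hn, rfl⟩
  exact hI.1.1 _ _ (hI.1.iUnion_mem hA) hcover
end
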